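/- arXiv:1007.1333 — 10 statements merged into one kernel-verified Lean document; each statement's English description precedes it below -/
import Mathlib

section
/- Let G = (V, E) be a finite simple graph and let k be a natural number. Let G' be the simple graph on the vertex set V ⊕ {v, v'} (two new vertices v and v') whose edge set consists of all edges of G together with all edges {w, v} for w ∈ V ⊕ {v'}. Then G' is connected and has more than one vertex, and G has a vertex cover of cardinality at most k if and only if G' has a vertex cover of cardinality at most k + 1. -/
/-
The vertex `v` is adjacent to every other vertex, so `G'` is connected. A cover of `G` plus `v`
covers `G'`. Conversely, the edge `vv'` forces every cover of `G'` to contain a new vertex, and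
its trace on `V` is a cover of `G` that is smaller by at least one.
-/

def IsVertexCover {V : Type} (G : SimpleGraph V) (C : Finset V) : Prop :=
  ∀ a b, G.Adj a b → a ∈ C ∨ b ∈ C

/-- The graph `G'` on `V ⊕ {v, v'}` (here `v = Sum.inr true`, `v' = Sum.inr false`)
whose edges are the edges of `G` together with all edges `{w, v}` for
`w ∈ V ⊕ {v'}`. -/
def extGraph {V : Type} (G : SimpleGraph V) : SimpleGraph (V ⊕ Bool) :=
  SimpleGraph.fromRel (fun x y =>
    (∃ a b, x = Sum.inl a ∧ y = Sum.inl b ∧ G.Adj a b) ∨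
    (x = Sum.inr true ∧ y ≠ Sum.inr true))

theorem Finset.card_preimage_lt {α β : Type*} {f : α → β} {s : Finset β} (hf) {y : β}
    (hy : y ∈ s) (hyf : y ∉ Set.range f) : (s.preimage f hf).card < s.card := by
  classical
  rw [card_preimage]
  exact card_lt_card (filter_ssubset.2 ⟨y, hy, hyf⟩)

theorem SimpleGraph.connected_of_forall_adj {W : Type*} {G : SimpleGraph W} {v : W}
    (h : ∀ w, w ≠ v → G.Adj w v) : G.Connected := by
  refine G.connected_iff_exists_forall_reachable.2 ⟨v, fun w => ?_⟩
  obtain rfl | hw := eq_or_ne w v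
  · rfl
  · exact (h w hw).reachable.symm

theorem isVertexCover_iff_isVertexCover_coe {W : Type} {G : SimpleGraph W} {C : Finset W} :
    IsVertexCover G C ↔ G.IsVertexCover (C : Set W) :=
  ⟨fun h _ _ hadj => h _ _ hadj, fun h _ _ hadj => h hadj⟩

namespace extGraph

variable {V : Type} (G : SimpleGraph V)

theorem adj_inl_inl {a b : V} : (extGraph G).Adj (.inl a) (.inl b) ↔ G.Adj a b := by
  simpa [extGraph, G.adj_comm b a] using SimpleGraph.Adj.ne

theorem adj_inr_true {x : V ⊕ Bool} (hx : x ≠ .inr true) : (extGraph G).Adj x (.inr true) :=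
  (SimpleGraph.fromRel_adj _ _ _).2 ⟨hx, .inr (.inr ⟨rfl, hx⟩)⟩

theorem inl_adj_inl_or_eq_inr_true_of_adj {x y : V ⊕ Bool} (h : (extGraph G).Adj x y) :
    (∃ a b, x = .inl a ∧ y = .inl b ∧ G.Adj a b) ∨ x = .inr true ∨ y = .inr true := by
  rcases (SimpleGraph.fromRel_adj _ _ _).1 h with
    ⟨-, (hxy | ⟨hx, -⟩) | (⟨a, b, rfl, rfl, hab⟩ | ⟨hy, -⟩)⟩
  exacts [.inl hxy, .inr (.inl hx), .inl ⟨b, a, rfl, rfl, hab.symm⟩, .inr (.inr hy)]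

def inlHom : G →g extGraph G where
  toFun := Sum.inl
  map_rel' := (adj_inl_inl G).2

theorem connected : (extGraph G).Connected :=
  SimpleGraph.connected_of_forall_adj fun _ => adj_inr_true G

end extGraph

namespace IsVertexCover

open extGraph

variable {V : Type} {G : SimpleGraph V}

theorem insert_inr_true_map_inl [DecidableEq V] {C : Finset V} (hC : IsVertexCover G C) :
    IsVertexCover (extGraph G) (insert (Sum.inr true) (C.map .inl)) := by
  intro x y hxy
  rcases inl_adj_inl_or_eq_inr_true_of_adj G hxy with ⟨a, b, rfl, rfl, hab⟩ | rfl | rfl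
  · simpa using hC a b hab
  · simp
  · simp

theorem preimage_inl {C : Finset (V ⊕ Bool)} (hC : IsVertexCover (extGraph G) C) :
    IsVertexCover G (C.preimage Sum.inl Sum.inl_injective.injOn) := by
  rw [isVertexCover_iff_isVertexCover_coe, Finset.coe_preimage]
  exact (isVertexCover_iff_isVertexCover_coe.1 hC).preimage (inlHom G)

theorem exists_inr_mem {C : Finset (V ⊕ Bool)}
    (hC : IsVertexCover (extGraph G) C) : ∃ b, .inr b ∈ C := by
  rcases hC _ _ (adj_inr_true G (x := .inr false) (by simp)) with h | h
  exacts [⟨_, h⟩, ⟨_, h⟩]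

end IsVertexCover

theorem vertexCover_extGraph {V : Type} [Fintype V] (G : SimpleGraph V) (k : ℕ) :
    (extGraph G).Connected ∧ 1 < Fintype.card (V ⊕ Bool) ∧
    ((∃ C : Finset V, IsVertexCover G C ∧ C.card ≤ k) ↔
      (∃ C : Finset (V ⊕ Bool), IsVertexCover (extGraph G) C ∧ C.card ≤ k + 1)) := by
  refine ⟨extGraph.connected G, by simp, ⟨fun ⟨C, hC, hk⟩ => ?_, fun ⟨C, hC, hk⟩ => ?_⟩⟩
  · classical
    refine ⟨_, hC.insert_inr_true_map_inl, ?_⟩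
    grw [Finset.card_insert_le, Finset.card_map, hk]
  · obtain ⟨b, hb⟩ := hC.exists_inr_mem
    refine ⟨_, hC.preimage_inl, ?_⟩
    have := Finset.card_preimage_lt Sum.inl_injective.injOn hb (by simp)
    omega
end

section
/- Let G_{v₀} = (V, E) be a nice graph and let B be a deterministic Büchi automaton over V_♮ with L_B(B) = L(G_{v₀}). Then: (1) no state of B is both a v-state for some v ∈ V and a w♮-state for some w ∈ V; (2) for all v, w ∈ V with v ≠ w, no state is both a v-state and a w-state; (3) for all v, w ∈ V with v ≠ w, no state is both a v♮-state and a w♮-state. -/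
/-- The run of the deterministic automaton `M` from state `q` on the infinite
word `x`. -/
def DFA.runFrom {α σ : Type*} (M : DFA α σ) (q : σ) (x : ℕ → α) : ℕ → σ
  | 0 => q
  | n + 1 => M.step (M.runFrom q x n) (x n)

/-- The Büchi language of a deterministic automaton: the set of infinite words
whose run from the initial state visits the accepting set infinitely often. -/
def BuchiLang {α σ : Type*} (M : DFA α σ) : Set (ℕ → α) :=
  {x | {n | M.runFrom M.start x n ∈ M.accept}.Infinite}

/-- `w` is a finite word of the form `v₀^{i₀} v₁^{i₁} ⋯ v_n^{i_n}` where
`v₀ v₁ ⋯ v_n` is a path in `G` starting at the distinguished vertex `v₀`, with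
`n ≥ 0`, `i₀ ≥ 0`, `i_j ≥ 1` for `1 ≤ j ≤ n`, and last vertex `v_n = u`. -/
def IsStutterPath {V : Type} (G : SimpleGraph V) (v₀ : V) (w : List V) (u : V) : Prop :=
  ∃ (n : ℕ) (v : ℕ → V) (i : ℕ → ℕ),
    v 0 = v₀ ∧ (∀ j, j < n → G.Adj (v j) (v (j + 1))) ∧
    (∀ j, 1 ≤ j → j ≤ n → 1 ≤ i j) ∧ v n = u ∧
    w = ((List.range (n + 1)).map (fun j => List.replicate (i j) (v j))).flatten

/-- Trace-words: infinite words `v₀^{i₀} v₁^{i₁} v₂^{i₂} ⋯ ∈ V^ω` with `i₀ ≥ 0`,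
`i_j ≥ 1` for `j ≥ 1`, along an infinite path `v₀ v₁ v₂ ⋯` of `G` starting at `v₀`.
The function `f` assigns to each position of the word the index of its block. -/
def IsTraceWord {V : Type} (G : SimpleGraph V) (v₀ : V) (α : ℕ → V ⊕ Unit) : Prop :=
  ∃ (v : ℕ → V) (f : ℕ → ℕ),
    v 0 = v₀ ∧ (∀ j, G.Adj (v j) (v (j + 1))) ∧
    f 0 ≤ 1 ∧ (∀ n, f n ≤ f (n + 1) ∧ f (n + 1) ≤ f n + 1) ∧
    (∀ m, ∃ n, m ≤ f n) ∧ (∀ n, α n = Sum.inl (v (f n)))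

/-- ♮-words: infinite words over `V ⊕ {♮}` (with `♮ = Sum.inr ()`) having a
prefix of the form `v₀^{i₀} v₁^{i₁} ⋯ v_n^{i_n} ♮ v_n`. -/
def IsNaturalWord {V : Type} (G : SimpleGraph V) (v₀ : V) (α : ℕ → V ⊕ Unit) : Prop :=
  ∃ (w : List V) (u : V), IsStutterPath G v₀ w u ∧
    (∀ k : Fin w.length, α k = Sum.inl (w.get k)) ∧
    α w.length = Sum.inr () ∧ α (w.length + 1) = Sum.inl u

/-- The characteristic language of the nice graph `G` with initial vertex `v₀`. -/
def CharLang {V : Type} (G : SimpleGraph V) (v₀ : V) : Set (ℕ → V ⊕ Unit) :=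
  {α | IsTraceWord G v₀ α ∨ IsNaturalWord G v₀ α}

/-- `q` is a `v`-state of `B`: it is reached from the initial state on some
finite word `v₀^{i₀} v₁^{i₁} ⋯ v_n^{i_n} ∈ V^*` along a path of `G` ending in `v`. -/
def IsVState {V σ : Type} (G : SimpleGraph V) (v₀ : V) (B : DFA (V ⊕ Unit) σ)
    (v : V) (q : σ) : Prop :=
  ∃ w : List V, IsStutterPath G v₀ w v ∧ B.eval (w.map Sum.inl) = q

/-- `q` is a `v♮`-state of `B`: it is reached from some `v`-state upon reading `♮`. -/
def IsNatState {V σ : Type} (G : SimpleGraph V) (v₀ : V) (B : DFA (V ⊕ Unit) σ)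
    (v : V) (q : σ) : Prop :=
  ∃ q', IsVState G v₀ B v q' ∧ q = B.step q' (Sum.inr ())

/-!
The state of a deterministic automaton after a finite prefix determines which continuations
are Büchi-accepted. A `v`-state is reached by a path word `u` for which `u ♮ v^ω` is a ♮-word,
and a `v♮`-state by `u ♮` for which `u ♮ v^ω` is one. Feeding the same continuation to a prefix
that reaches a `w`-state or a `w♮`-state instead produces a word in which `♮` is followed by `♮`
or by a vertex other than the endpoint of the path, and such a word is not in `L(G_{v₀})`.
-/

open scoped Stream'

namespace DFA

variable {α σ : Type*} (M : DFA α σ)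

theorem runFrom_cons_succ (s : σ) (a : α) (x : Stream' α) (n : ℕ) :
    M.runFrom s (a :: x) (n + 1) = M.runFrom (M.step s a) x n := by
  induction n with
  | zero => rfl
  | succ n ih => exact congrArg (M.step · (x n)) ih

theorem runFrom_append_stream_length_add (s : σ) (u : List α) (x : Stream' α) (n : ℕ) :
    M.runFrom s (u ++ₛ x) (u.length + n) = M.runFrom (M.evalFrom s u) x n := by
  induction u generalizing s with
  | nil => simp
  | cons a u ih =>
    rw [List.length_cons, Nat.add_right_comm, Stream'.cons_append_stream, runFrom_cons_succ, ih]
    rfl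

theorem append_stream_mem_buchiLang_iff (u : List α) (x : Stream' α) :
    u ++ₛ x ∈ BuchiLang M ↔ {n | M.runFrom (M.eval u) x n ∈ M.accept}.Infinite := by
  change {n | M.runFrom M.start (u ++ₛ x) n ∈ M.accept}.Infinite ↔ _
  rw [← Nat.frequently_atTop_iff_infinite, ← Filter.map_add_atTop_eq_nat u.length,
    Filter.frequently_map, ← Nat.frequently_atTop_iff_infinite]
  simp only [add_comm _ u.length, runFrom_append_stream_length_add]
  rfl

theorem append_stream_mem_buchiLang_congr {u₁ u₂ : List α} (h : M.eval u₁ = M.eval u₂)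
    (x : Stream' α) : u₁ ++ₛ x ∈ BuchiLang M ↔ u₂ ++ₛ x ∈ BuchiLang M := by
  rw [append_stream_mem_buchiLang_iff, append_stream_mem_buchiLang_iff, h]

end DFA

theorem List.map_append_stream_apply_of_lt {α β : Type*} (f : α → β) (w : List α)
    (s : Stream' β) {k : ℕ} (hk : k < w.length) : (w.map f ++ₛ s) k = f w[k] :=
  (Stream'.get_append_left k (w.map f) s (by simpa using hk)).trans (List.getElem_map f)

theorem List.map_append_stream_apply_length_add {α β : Type*} (f : α → β) (w : List α)
    (s : Stream' β) (n : ℕ) : (w.map f ++ₛ s) (w.length + n) = s n := by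
  have h := Stream'.get_append_right n (w.map f) s
  rwa [List.length_map] at h

section CharLang

variable {V : Type} {G : SimpleGraph V} {v₀ u : V} {w : List V}

theorem IsStutterPath.getLastD_eq (h : IsStutterPath G v₀ w u) : w.getLastD v₀ = u := by
  obtain ⟨n, v, i, hv₀, -, hi, rfl, rfl⟩ := h
  rw [List.range_succ, List.map_append, List.flatten_append, List.getLastD_eq_getLast?,
    List.getLast?_append]
  simp only [List.map_cons, List.map_nil, List.flatten_cons, List.flatten_nil, List.append_nil,
    List.getLast?_replicate]
  rcases n with _ | n
  · split_ifs <;> simp [hv₀]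
  · rw [if_neg (by have := hi (n + 1) (by omega) le_rfl; omega)]
    rfl

theorem IsStutterPath.append_natural_const_mem_charLang (h : IsStutterPath G v₀ w u) :
    (w.map Sum.inl ++ [Sum.inr ()]) ++ₛ Stream'.const (Sum.inl u) ∈ CharLang G v₀ := by
  rw [Stream'.append_append_stream]
  exact Or.inr ⟨w, u, h, fun k => w.map_append_stream_apply_of_lt _ _ k.2,
    w.map_append_stream_apply_length_add _ _ 0, w.map_append_stream_apply_length_add _ _ 1⟩

theorem IsStutterPath.eq_of_append_natural_mem_charLang (h : IsStutterPath G v₀ w u)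
    {b : V ⊕ Unit} {x : Stream' (V ⊕ Unit)}
    (hx : (w.map Sum.inl ++ [Sum.inr ()]) ++ₛ b :: x ∈ CharLang G v₀) : b = Sum.inl u := by
  rw [Stream'.append_append_stream] at hx
  set s : Stream' (V ⊕ Unit) := [Sum.inr ()] ++ₛ b :: x
  have hlt {k} (hk : k < w.length) := w.map_append_stream_apply_of_lt Sum.inl s hk
  have hnat := w.map_append_stream_apply_length_add Sum.inl s 0
  have hsucc := w.map_append_stream_apply_length_add Sum.inl s 1
  rcases hx with ⟨v, f, -, -, -, -, -, hy⟩ | ⟨w', u', h', hy, hy₁, hy₂⟩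
  · cases hnat.symm.trans (hy _)
  · have hlen : w'.length = w.length := by
      by_contra hne
      rcases Nat.lt_or_gt_of_ne hne with hl | hl
      · cases hy₁.symm.trans (hlt hl)
      · cases hnat.symm.trans (hy ⟨w.length, hl⟩)
    obtain rfl : w' = w := List.ext_getElem hlen fun k hk hk' =>
      Sum.inl_injective ((hy ⟨k, hk⟩).symm.trans (hlt hk'))
    rw [← h.getLastD_eq, h'.getLastD_eq, ← hy₂]
    exact hsucc.symm

end CharLang

theorem vStates_natStates_disjoint_general {V σ : Type}
    (G : SimpleGraph V) (v₀ : V)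
    (B : DFA (V ⊕ Unit) σ) (hL : BuchiLang B = CharLang G v₀) :
    (∀ (q : σ) (v w : V), ¬(IsVState G v₀ B v q ∧ IsNatState G v₀ B w q)) ∧
    (∀ (q : σ) (v w : V), v ≠ w → ¬(IsVState G v₀ B v q ∧ IsVState G v₀ B w q)) ∧
    (∀ (q : σ) (v w : V), v ≠ w → ¬(IsNatState G v₀ B v q ∧ IsNatState G v₀ B w q)) := by
  have transfer {u₁ u₂ : List (V ⊕ Unit)} (h : B.eval u₁ = B.eval u₂) {x : Stream' (V ⊕ Unit)}
      (hx : u₁ ++ₛ x ∈ CharLang G v₀) : u₂ ++ₛ x ∈ CharLang G v₀ := by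
    rw [← hL] at hx ⊢
    exact (B.append_stream_mem_buchiLang_congr h x).1 hx
  refine ⟨?_, ?_, ?_⟩
  · rintro q v w ⟨⟨wv, hv, rfl⟩, q', ⟨ww, hw, rfl⟩, hq⟩
    have hv' := hv.append_natural_const_mem_charLang
    rw [Stream'.append_append_stream] at hv'
    have hw' := transfer (u₂ := ww.map Sum.inl ++ [Sum.inr ()]) (by simpa using hq) hv'
    exact Sum.inr_ne_inl (hw.eq_of_append_natural_mem_charLang hw')
  · rintro q v w hvw ⟨⟨wv, hv, rfl⟩, ⟨ww, hw, hq⟩⟩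
    have hv' := hv.append_natural_const_mem_charLang
    rw [Stream'.append_append_stream] at hv'
    have hw' := transfer hq.symm hv'
    rw [← Stream'.append_append_stream, Stream'.const_eq] at hw'
    exact hvw (Sum.inl_injective (hw.eq_of_append_natural_mem_charLang hw'))
  · rintro q v w hvw ⟨⟨_, ⟨wv, hv, rfl⟩, rfl⟩, _, ⟨ww, hw, rfl⟩, hq⟩
    have hw' := transfer (u₂ := ww.map Sum.inl ++ [Sum.inr ()]) (by simpa using hq)
      hv.append_natural_const_mem_charLang
    rw [Stream'.const_eq] at hw'
    exact hvw (Sum.inl_injective (hw.eq_of_append_natural_mem_charLang hw'))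

theorem vStates_natStates_disjoint {V σ : Type} [Fintype V] [Fintype σ]
    (G : SimpleGraph V) (v₀ : V) (hconn : G.Connected) (hcard : 1 < Fintype.card V)
    (B : DFA (V ⊕ Unit) σ) (hL : BuchiLang B = CharLang G v₀) :
    (∀ (q : σ) (v w : V), ¬(IsVState G v₀ B v q ∧ IsNatState G v₀ B w q)) ∧
    (∀ (q : σ) (v w : V), v ≠ w → ¬(IsVState G v₀ B v q ∧ IsVState G v₀ B w q)) ∧
    (∀ (q : σ) (v w : V), v ≠ w → ¬(IsNatState G v₀ B v q ∧ IsNatState G v₀ B w q)) :=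
  vStates_natStates_disjoint_general G v₀ B hL
end

section
/- Let G_{v₀} = (V, E) be a nice graph and let B be a deterministic Büchi automaton over V_♮ with L_B(B) = L(G_{v₀}). Then for every vertex v ∈ V there exists a v♮-state of B, and there exists a v-state of B that is not in the accepting set. -/
/-!
Follow a path from `v₀` to `v` and then stutter on `v` forever. The resulting word `w v^ω` is
neither a ♮-word (it has no ♮) nor a trace-word (a trace-word moves along an edge infinitely
often, and `G` has no loops), so the run of `B` on it leaves the accepting set for good. Every
state on that run after the prefix `w` is reached by a stutter path ending in `v`, so it is a
rejecting `v`-state; reading ♮ from any `v`-state gives a `v♮`-state.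
-/

open Filter

lemma DFA.runFrom_eq_evalFrom_ofFn {α σ : Type*} (M : DFA α σ) (q : σ) (x : ℕ → α) (n : ℕ) :
    M.runFrom q x n = M.evalFrom q (List.ofFn fun i : Fin n => x i) := by
  induction n with
  | zero => rfl
  | succ n ih =>
    rw [List.ofFn_succ_last, DFA.evalFrom_append_singleton]
    exact congrArg (M.step · (x n)) ih

lemma DFA.notMem_buchiLang_iff {α σ : Type*} (M : DFA α σ) (x : ℕ → α) :
    x ∉ BuchiLang M ↔ ∀ᶠ n in atTop, M.runFrom M.start x n ∉ M.accept := by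
  rw [← not_frequently, Nat.frequently_atTop_iff_infinite]
  rfl

lemma List.ofFn_getD_of_length_le {α : Type*} (w : List α) (a : α) {n : ℕ}
    (hn : w.length ≤ n) :
    List.ofFn (fun i : Fin n => w.getD i a) = w ++ List.replicate (n - w.length) a := by
  apply List.ext_getElem (by simp; omega)
  intro k hk _
  rw [List.getElem_ofFn]
  by_cases hkw : k < w.length
  · rw [List.getD_eq_getElem _ _ hkw, List.getElem_append_left hkw]
  · rw [List.getD_eq_default _ _ (not_lt.mp hkw), List.getElem_append_right (not_lt.mp hkw),
      List.getElem_replicate]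

lemma Nat.exists_ge_apply_ne_apply_succ {f : ℕ → ℕ} (hf : Monotone f)
    (hunb : ∀ m, ∃ n, m ≤ f n) (N : ℕ) : ∃ n ≥ N, f n ≠ f (n + 1) := by
  by_contra! hconst
  have hN : ∀ n ≥ N, f n = f N :=
    fun n hn => Nat.le_induction rfl (fun k hk ih => (hconst k hk).symm.trans ih) n hn
  obtain ⟨m, hm⟩ := hunb (f N + 1)
  rcases le_total m N with hmN | hNm
  · have := hf hmN
    omega
  · have := hN m hNm
    omega

section CharLang

variable {V : Type} {G : SimpleGraph V} {v₀ : V}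

lemma SimpleGraph.Reachable.exists_isStutterPath {v : V} (h : G.Reachable v₀ v) :
    ∃ w, IsStutterPath G v₀ w v := by
  obtain ⟨p⟩ := h
  exact ⟨_, p.length, p.getVert, fun _ => 1, p.getVert_zero,
    fun j hj => p.adj_getVert_succ hj, fun _ _ _ => le_rfl, p.getVert_length, rfl⟩

lemma IsStutterPath.append_replicate {w : List V} {u : V} (h : IsStutterPath G v₀ w u)
    (m : ℕ) : IsStutterPath G v₀ (w ++ List.replicate m u) u := by
  obtain ⟨n, v, i, h0, hadj, hi, rfl, rfl⟩ := h
  have flatten_range_succ : ∀ i' : ℕ → ℕ,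
      ((List.range (n + 1)).map fun j => List.replicate (i' j) (v j)).flatten =
        ((List.range n).map fun j => List.replicate (i' j) (v j)).flatten ++
          List.replicate (i' n) (v n) := by
    intro i'
    simp [List.range_succ]
  refine ⟨n, v, Function.update i n (i n + m), h0, hadj, fun j hj1 hjn => ?_, rfl, ?_⟩
  · rcases eq_or_ne j n with rfl | hjn'
    · simpa using le_add_right (hi j hj1 hjn)
    · simpa [hjn'] using hi j hj1 hjn
  · have hprefix : ((List.range n).map fun j =>
          List.replicate (Function.update i n (i n + m) j) (v j)) =
        (List.range n).map fun j => List.replicate (i j) (v j) :=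
      List.map_congr_left fun j hj => by
        rw [Function.update_of_ne (List.mem_range.mp hj).ne]
    rw [flatten_range_succ, flatten_range_succ, hprefix, Function.update_self,
      List.replicate_add, List.append_assoc]

lemma IsTraceWord.exists_ge_ne_succ {α : ℕ → V ⊕ Unit} (h : IsTraceWord G v₀ α) (N : ℕ) :
    ∃ n ≥ N, α n ≠ α (n + 1) := by
  obtain ⟨v, f, -, hadj, -, hstep, hunb, hα⟩ := h
  obtain ⟨n, hnN, hne⟩ :=
    Nat.exists_ge_apply_ne_apply_succ (monotone_nat_of_le_succ fun n => (hstep n).1) hunb N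
  have hsucc : f (n + 1) = f n + 1 := by
    have := hstep n
    omega
  refine ⟨n, hnN, ?_⟩
  rw [hα, hα, hsucc, Ne, Sum.inl.injEq]
  exact (hadj (f n)).ne

lemma getD_notMem_charLang (w : List V) (u : V) :
    (fun k => Sum.inl (w.getD k u)) ∉ CharLang G v₀ := by
  rintro (htrace | ⟨w', -, -, -, hnat, -⟩)
  · obtain ⟨n, hn, hne⟩ := htrace.exists_ge_ne_succ w.length
    rw [List.getD_eq_default _ _ hn, List.getD_eq_default _ _ (by omega)] at hne
    exact hne rfl
  · exact Sum.inl_ne_inr hnat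

end CharLang

theorem exists_natState_and_rejecting_vState_general {V σ : Type}
    (G : SimpleGraph V) (v₀ : V) (hconn : G.Connected)
    (B : DFA (V ⊕ Unit) σ) (hL : BuchiLang B = CharLang G v₀) :
    ∀ v : V, (∃ q : σ, IsNatState G v₀ B v q) ∧
      (∃ q : σ, IsVState G v₀ B v q ∧ q ∉ B.accept) := by
  intro v
  obtain ⟨w, hw⟩ := (hconn v₀ v).exists_isStutterPath
  refine ⟨⟨_, _, ⟨w, hw, rfl⟩, rfl⟩, ?_⟩
  set x : ℕ → V ⊕ Unit := fun k => Sum.inl (w.getD k v)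
  have hx : x ∉ BuchiLang B := hL ▸ getD_notMem_charLang w v
  obtain ⟨n, hrej, hn⟩ :=
    (((B.notMem_buchiLang_iff x).mp hx).and (eventually_ge_atTop w.length)).exists
  refine ⟨_, ⟨w ++ List.replicate (n - w.length) v, hw.append_replicate _, ?_⟩, hrej⟩
  rw [B.runFrom_eq_evalFrom_ofFn, ← List.ofFn_getD_of_length_le w v hn, List.map_ofFn]
  rfl

theorem exists_natState_and_rejecting_vState {V σ : Type} [Fintype V] [Fintype σ]
    (G : SimpleGraph V) (v₀ : V) (hconn : G.Connected) (hcard : 1 < Fintype.card V)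
    (B : DFA (V ⊕ Unit) σ) (hL : BuchiLang B = CharLang G v₀) :
    ∀ v : V, (∃ q : σ, IsNatState G v₀ B v q) ∧
      (∃ q : σ, IsVState G v₀ B v q ∧ q ∉ B.accept) :=
  exists_natState_and_rejecting_vState_general G v₀ hconn B hL
end

section
/- Let G_{v₀} = (V, E) be a nice graph and let B be a deterministic Büchi automaton over V_♮ with L_B(B) = L(G_{v₀}). Then for every edge {v, w} ∈ E there exists a v-state of B in the accepting set or a w-state of B in the accepting set. -/
/-!
Follow a walk from `v₀` to `v` and then oscillate along the edge `{v, w}` forever. The vertex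
sequence is an infinite path, so it spells a trace-word, which `B` must accept. The run therefore
visits `F` at some position after the walk has ended; the state there was reached on a stuttered
path prefix whose last vertex is `v` or `w`, so it is an accepting `v`- or `w`-state.
-/

theorem DFA.runFrom_eq_evalFrom {α σ : Type*} (M : DFA α σ) (q : σ) (x : ℕ → α) :
    ∀ n, M.runFrom q x n = M.evalFrom q ((List.range n).map x)
  | 0 => rfl
  | n + 1 => by
    rw [DFA.runFrom, runFrom_eq_evalFrom M q x n, List.range_succ, List.map_append,
      List.map_singleton, DFA.evalFrom_append_singleton]

namespace SimpleGraph

variable {V : Type*} {G : SimpleGraph V}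

def Walk.thenSeq {u v : V} (p : G.Walk u v) (s : ℕ → V) (j : ℕ) : V :=
  if j < p.length then p.getVert j else s (j - p.length)

theorem Walk.thenSeq_zero {u v : V} (p : G.Walk u v) {s : ℕ → V} (hs : s 0 = v) :
    p.thenSeq s 0 = u := by
  unfold Walk.thenSeq
  split_ifs with h
  · exact p.getVert_zero
  · rw [Nat.eq_zero_of_not_pos h, Nat.sub_self, hs]
    exact (p.eq_of_length_eq_zero (Nat.eq_zero_of_not_pos h)).symm

theorem Walk.thenSeq_length_add {u v : V} (p : G.Walk u v) (s : ℕ → V) (k : ℕ) :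
    p.thenSeq s (p.length + k) = s k := by
  simp [Walk.thenSeq]

theorem Walk.adj_thenSeq_succ {u v : V} (p : G.Walk u v) {s : ℕ → V} (hs : s 0 = v)
    (hadj : ∀ k, G.Adj (s k) (s (k + 1))) (j : ℕ) :
    G.Adj (p.thenSeq s j) (p.thenSeq s (j + 1)) := by
  unfold Walk.thenSeq
  split_ifs with h₁ h₂ h₂
  · exact p.adj_getVert_succ h₁
  · have hlen : p.length = j + 1 := by omega
    rw [show j + 1 - p.length = 0 by omega, hs]
    simpa [p.getVert_of_length_le hlen.le] using p.adj_getVert_succ h₁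
  · omega
  · rw [show j + 1 - p.length = j - p.length + 1 by omega]
    exact hadj _

end SimpleGraph

def oscillate {V : Type*} (v w : V) (k : ℕ) : V :=
  if Even k then v else w

theorem oscillate_eq_or {V : Type*} (v w : V) (k : ℕ) :
    oscillate v w k = v ∨ oscillate v w k = w := by
  unfold oscillate
  split_ifs <;> simp

theorem SimpleGraph.Adj.oscillate {V : Type*} {G : SimpleGraph V} {v w : V} (h : G.Adj v w)
    (k : ℕ) : G.Adj (oscillate v w k) (oscillate v w (k + 1)) := by
  unfold _root_.oscillate
  by_cases hk : Even k
  · simpa [hk, Nat.even_add_one] using h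
  · simpa [hk, Nat.even_add_one] using h.symm

section InfinitePath

variable {V σ : Type} {G : SimpleGraph V} {v₀ : V} {vs : ℕ → V}

theorem isTraceWord_of_path (h₀ : vs 0 = v₀) (hadj : ∀ j, G.Adj (vs j) (vs (j + 1))) :
    IsTraceWord G v₀ (Sum.inl ∘ vs) :=
  ⟨vs, id, h₀, hadj, Nat.zero_le 1, fun n => ⟨Nat.le_succ n, le_rfl⟩, fun m => ⟨m, le_rfl⟩,
    fun _ => rfl⟩

theorem isStutterPath_range_map (h₀ : vs 0 = v₀) (hadj : ∀ j, G.Adj (vs j) (vs (j + 1)))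
    (n : ℕ) : IsStutterPath G v₀ ((List.range (n + 1)).map vs) (vs n) := by
  refine ⟨n, vs, fun _ => 1, h₀, fun j _ => hadj j, fun _ _ _ => le_rfl, rfl, ?_⟩
  simpa [List.flatMap_def] using List.map_eq_flatMap

theorem exists_accepting_vState_of_path (B : DFA (V ⊕ Unit) σ)
    (hL : CharLang G v₀ ⊆ BuchiLang B) (h₀ : vs 0 = v₀)
    (hadj : ∀ j, G.Adj (vs j) (vs (j + 1))) (N : ℕ) :
    ∃ n ≥ N, ∃ q, IsVState G v₀ B (vs n) q ∧ q ∈ B.accept := by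
  have hinf : {n | B.runFrom B.start (Sum.inl ∘ vs) n ∈ B.accept}.Infinite :=
    hL (Or.inl (isTraceWord_of_path h₀ hadj))
  obtain ⟨n, hacc, hn⟩ := hinf.exists_gt N
  obtain ⟨k, rfl⟩ : ∃ k, n = k + 1 := Nat.exists_eq_succ_of_ne_zero (by omega)
  refine ⟨k, by omega, _, ⟨_, isStutterPath_range_map h₀ hadj k, ?_⟩, hacc⟩
  rw [DFA.runFrom_eq_evalFrom, List.map_map]
  rfl

end InfinitePath

theorem exists_accepting_vState_of_edge_general {V σ : Type}
    (G : SimpleGraph V) (v₀ : V) (hconn : G.Connected)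
    (B : DFA (V ⊕ Unit) σ) (hL : BuchiLang B = CharLang G v₀) :
    ∀ v w : V, G.Adj v w →
      (∃ q : σ, IsVState G v₀ B v q ∧ q ∈ B.accept) ∨
      (∃ q : σ, IsVState G v₀ B w q ∧ q ∈ B.accept) := by
  intro v w hvw
  obtain ⟨p⟩ : G.Reachable v₀ v := hconn.preconnected v₀ v
  have hs₀ : oscillate v w 0 = v := if_pos Even.zero
  obtain ⟨n, hn, q, hq, hacc⟩ := exists_accepting_vState_of_path B hL.ge
    (p.thenSeq_zero hs₀) (p.adj_thenSeq_succ hs₀ hvw.oscillate) p.length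
  obtain ⟨k, rfl⟩ := Nat.exists_eq_add_of_le hn
  rw [p.thenSeq_length_add] at hq
  rcases oscillate_eq_or v w k with h | h
  · exact Or.inl ⟨q, h ▸ hq, hacc⟩
  · exact Or.inr ⟨q, h ▸ hq, hacc⟩

theorem exists_accepting_vState_of_edge {V σ : Type} [Fintype V] [Fintype σ]
    (G : SimpleGraph V) (v₀ : V) (hconn : G.Connected) (hcard : 1 < Fintype.card V)
    (B : DFA (V ⊕ Unit) σ) (hL : BuchiLang B = CharLang G v₀) :
    ∀ v w : V, G.Adj v w →
      (∃ q : σ, IsVState G v₀ B v q ∧ q ∈ B.accept) ∨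
      (∃ q : σ, IsVState G v₀ B w q ∧ q ∈ B.accept) :=
  exists_accepting_vState_of_edge_general G v₀ hconn B hL
end

section
/- Let G_{v₀} = (V, E) be a nice graph and let B be a deterministic Büchi automaton over V_♮ with L_B(B) = L(G_{v₀}). Then the set C = {v ∈ V | some v-state of B is in the accepting set} is a vertex cover of G, and the state type of B has cardinality at least 2·|V| + |C|. -/
/-!
Everything rests on residual languages. If `q` is a `v`-state, then from `q` the automaton accepts
`♮ x` exactly when `x` begins with `v`, because the only words of `L(G_{v₀})` containing `♮` are
♮-words, and the prefix before the first `♮` determines the vertex that must follow it. Comparing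
residuals, a state is a `v`-state for at most one `v`, a `v♮`-state for at most one `v`, and never
both a `v`-state and a `u♮`-state.

Every `v` has a non-accepting `v`-state: walk from `v₀` to `v` and stay there forever; this word is
not a trace-word, so the run eventually avoids the accepting set. Every edge `{a, b}` meets `C`:
walk to `a` and then oscillate along the edge; this trace-word is accepted, so some accepting state
is reached right after reading `a` or `b`. The non-accepting `v`-states, their `♮`-successors and
one accepting `v`-state for each `v ∈ C` are therefore `2|V| + |C|` distinct states.
-/

theorem Nat.infinite_setOf_add_iff {p : ℕ → Prop} (k : ℕ) :
    {n | p (n + k)}.Infinite ↔ {n | p n}.Infinite := by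
  rw [← Nat.frequently_atTop_iff_infinite, ← Nat.frequently_atTop_iff_infinite,
    ← Filter.frequently_map (m := fun n => n + k), Filter.map_add_atTop_eq_nat]

namespace DFA

variable {α σ : Type*} (M : DFA α σ)

def buchiLangFrom (q : σ) : Set (ℕ → α) :=
  {x | {n | M.runFrom q x n ∈ M.accept}.Infinite}

theorem runFrom_eq_evalFrom_s4 (q : σ) (x : Stream' α) (n : ℕ) :
    M.runFrom q x n = M.evalFrom q (x.take n) := by
  induction n with
  | zero => rfl
  | succ n ih => rw [Stream'.take_succ', evalFrom_append_singleton, ← ih]; rfl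

theorem runFrom_append_stream (q : σ) (l : List α) (x : Stream' α) (n : ℕ) :
    M.runFrom q (l ++ₛ x) (n + l.length) = M.runFrom (M.evalFrom q l) x n := by
  induction n with
  | zero =>
    have h : Stream'.take l.length (l ++ₛ x) = l := by
      rw [Stream'.take_append_of_le_length _ _ _ le_rfl, List.take_length]
    rw [zero_add, runFrom_eq_evalFrom_s4, h]
    rfl
  | succ n ih =>
    rw [Nat.add_right_comm]
    refine congrArg₂ M.step ih ?_
    rw [Nat.add_comm]
    exact Stream'.get_append_right n l x

variable {M}

theorem append_stream_mem_buchiLangFrom {q : σ} {l : List α} {x : Stream' α} :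
    l ++ₛ x ∈ M.buchiLangFrom q ↔ x ∈ M.buchiLangFrom (M.evalFrom q l) := by
  refine (Nat.infinite_setOf_add_iff l.length).symm.trans ?_
  simp only [runFrom_append_stream]
  rfl

theorem cons_mem_buchiLangFrom {q : σ} {a : α} {x : Stream' α} :
    Stream'.cons a x ∈ M.buchiLangFrom q ↔ x ∈ M.buchiLangFrom (M.step q a) :=
  append_stream_mem_buchiLangFrom (l := [a])

end DFA

namespace IsStutterPath

variable {V : Type} {G : SimpleGraph V} {v₀ : V}

theorem nil : IsStutterPath G v₀ [] v₀ :=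
  ⟨0, fun _ => v₀, fun _ => 0, rfl, by simp, fun _ _ _ => by omega, rfl, rfl⟩

theorem concat_self {w : List V} {u : V} (h : IsStutterPath G v₀ w u) :
    IsStutterPath G v₀ (w ++ [u]) u := by
  obtain ⟨n, v, i, hv0, hadj, hi, rfl, rfl⟩ := h
  refine ⟨n, v, Function.update i n (i n + 1), hv0, hadj, fun j hj hjn => ?_, rfl, ?_⟩
  · rcases eq_or_ne j n with rfl | hne
    · simp
    · simpa [hne] using hi j hj hjn
  · rw [List.range_succ, List.map_append, List.map_append, List.flatten_append,
      List.flatten_append, List.append_assoc]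
    congr 1
    · refine congrArg List.flatten (List.map_congr_left fun j hj => ?_)
      rw [Function.update_of_ne (List.mem_range.mp hj).ne]
    · simp [List.replicate_succ']

theorem concat_adj {w : List V} {u u' : V} (h : IsStutterPath G v₀ w u) (hadj : G.Adj u u') :
    IsStutterPath G v₀ (w ++ [u']) u' := by
  obtain ⟨n, v, i, hv0, hvadj, hi, rfl, rfl⟩ := h
  refine ⟨n + 1, Function.update v (n + 1) u', Function.update i (n + 1) 1, ?_, ?_, ?_, by simp, ?_⟩
  · simpa using hv0
  · intro j hj
    rcases Nat.lt_succ_iff_lt_or_eq.mp hj with hj | rfl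
    · simpa [Function.update_of_ne (show j ≠ n + 1 by omega),
        Function.update_of_ne (show j + 1 ≠ n + 1 by omega)] using hvadj j hj
    · simpa using hadj
  · intro j hj hjn
    rcases Nat.lt_or_ge j (n + 1) with hlt | hge
    · simpa [Function.update_of_ne hlt.ne] using hi j hj (by omega)
    · simp [show j = n + 1 by omega]
  · rw [List.range_succ (n := n + 1), List.map_append, List.flatten_append]
    congr 1
    · refine congrArg List.flatten (List.map_congr_left fun j hj => ?_)
      have hj : j ≠ n + 1 := (List.mem_range.mp hj).ne
      rw [Function.update_of_ne hj, Function.update_of_ne hj]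
    · simp

theorem getLastD_eq_s4 {w : List V} {u : V} (h : IsStutterPath G v₀ w u) : w.getLastD v₀ = u := by
  obtain ⟨n, v, i, hv0, -, hi, rfl, rfl⟩ := h
  rw [List.range_succ, List.map_append, List.flatten_append]
  rcases Nat.eq_zero_or_pos (i n) with hi0 | hpos
  · obtain rfl : n = 0 := by
      by_contra hn
      have := hi n (Nat.one_le_iff_ne_zero.mpr hn) le_rfl
      omega
    simp [hi0, hv0]
  · obtain ⟨k, hk⟩ : ∃ k, i n = k + 1 := ⟨i n - 1, by omega⟩
    simp [hk, List.replicate_succ', ← List.append_assoc]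

end IsStutterPath

theorem isStutterPath_take {V : Type} {G : SimpleGraph V} {v₀ : V} {s : Stream' V}
    (h0 : s.get 0 = v₀) {n : ℕ}
    (hs : ∀ j < n, s.get j = s.get (j + 1) ∨ G.Adj (s.get j) (s.get (j + 1))) :
    IsStutterPath G v₀ (s.take (n + 1)) (s.get n) := by
  induction n with
  | zero => simpa [h0, Stream'.take] using IsStutterPath.nil.concat_self (G := G) (v₀ := v₀)
  | succ n ih =>
    rw [Stream'.take_succ']
    rcases hs n n.lt_succ_self with heq | hadj
    · rw [← heq]; exact (ih fun j hj => hs j (by omega)).concat_self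
    · exact (ih fun j hj => hs j (by omega)).concat_adj hadj

theorem SimpleGraph.Walk.exists_adj_seq_eventually_mem_edge {V : Type} {G : SimpleGraph V}
    {u a b : V} (W : G.Walk u a) (hab : G.Adj a b) :
    ∃ s : Stream' V, s.get 0 = u ∧ (∀ j, G.Adj (s.get j) (s.get (j + 1))) ∧
      ∀ j, W.length ≤ j → s.get j = a ∨ s.get j = b := by
  let s : Stream' V := fun j =>
    if j ≤ W.length then W.getVert j else if Even (j - W.length) then a else b
  have htail : ∀ j, W.length ≤ j → s.get j = if Even (j - W.length) then a else b := by
    intro j hj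
    rcases hj.eq_or_lt with rfl | hlt
    · simp [s, Stream'.get]
    · simp [s, Stream'.get, hlt.not_ge]
  refine ⟨s, by simp [s, Stream'.get], fun j => ?_, fun j hj => ?_⟩
  · rcases lt_or_ge j W.length with hj | hj
    · simpa [s, Stream'.get, hj.le, Nat.succ_le_of_lt hj] using W.adj_getVert_succ hj
    · rw [htail j hj, htail (j + 1) (by omega)]
      simp only [Nat.sub_add_comm hj, Nat.even_add_one]
      split_ifs <;> first | exact hab | exact hab.symm
  · rw [htail j hj]
    split_ifs <;> simp

theorem List.eq_of_inl_prefix_of_inr {α β : Type*} {x : ℕ → α ⊕ β} {w w' : List α} {b b' : β}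
    (h : ∀ k : Fin w.length, x k = Sum.inl (w.get k)) (hb : x w.length = Sum.inr b)
    (h' : ∀ k : Fin w'.length, x k = Sum.inl (w'.get k)) (hb' : x w'.length = Sum.inr b') :
    w = w' := by
  have hlen : w.length = w'.length := by
    by_contra hne
    rcases Nat.lt_or_gt_of_ne hne with hlt | hlt
    · simpa [hb] using h' ⟨w.length, hlt⟩
    · simpa [hb'] using h ⟨w'.length, hlt⟩
  exact List.ext_get hlen fun k hk hk' =>
    Sum.inl_injective ((h ⟨k, hk⟩).symm.trans (h' ⟨k, hk'⟩))

section CharLang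

variable {V : Type} {G : SimpleGraph V} {v₀ : V}

theorem mem_charLang_of_adj {s : Stream' V} (h0 : s.get 0 = v₀)
    (hs : ∀ j, G.Adj (s.get j) (s.get (j + 1))) : s.map Sum.inl ∈ CharLang G v₀ :=
  Or.inl ⟨s, id, h0, hs, zero_le_one, fun n => ⟨n.le_succ, le_rfl⟩, fun m => ⟨m, le_rfl⟩,
    fun _ => rfl⟩

theorem map_inl_notMem_charLang_of_eventually_const {s : Stream' V} {x : V} {N : ℕ}
    (hs : ∀ n, N ≤ n → s.get n = x) : s.map Sum.inl ∉ CharLang G v₀ := by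
  rintro (⟨v, f, -, hadj, -, hf, hunbdd, hα⟩ | ⟨w, u, -, -, hnat, -⟩)
  · have hvf : ∀ n, N ≤ n → v (f n) = x := fun n hn =>
      Sum.inl_injective ((hα n).symm.trans (congrArg Sum.inl (hs n hn)))
    -- the unbounded block index `f` must step up somewhere past `N`, making `x` adjacent to itself
    obtain ⟨k, hk, hfk⟩ : ∃ k, N ≤ k ∧ f (k + 1) = f k + 1 := by
      by_contra! hflat
      have hconst : ∀ n, N ≤ n → f n = f N := fun n hn => by
        induction n, hn using Nat.le_induction with
        | base => rfl
        | succ n hn ih => have := hf n; have := hflat n hn; omega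
      obtain ⟨n, hn⟩ := hunbdd (f N + 1)
      have hmono : Monotone f := monotone_nat_of_le_succ fun n => (hf n).1
      have := hmono (le_max_left n N)
      have := hconst (max n N) (le_max_right n N)
      omega
    have hxx := hadj (f k)
    rw [← hfk, hvf k hk, hvf (k + 1) (by omega)] at hxx
    exact G.irrefl hxx
  · exact Sum.inl_ne_inr hnat

theorem IsStutterPath.append_cons_inr_mem_charLang_iff {w : List V} {u : V}
    (hw : IsStutterPath G v₀ w u) (x : Stream' (V ⊕ Unit)) :
    w.map Sum.inl ++ₛ Stream'.cons (Sum.inr ()) x ∈ CharLang G v₀ ↔ x.head = Sum.inl u := by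
  set α := w.map Sum.inl ++ₛ Stream'.cons (Sum.inr ()) x
  have hpre : ∀ k : Fin w.length, α k = Sum.inl (w.get k) := fun k =>
    (Stream'.get_append_left _ _ _ (by simp)).trans (by simp)
  have hnat : α w.length = Sum.inr () := by
    rw [← List.length_map (f := Sum.inl)]
    exact Stream'.get_append_right 0 _ _
  have hnext : α (w.length + 1) = x.head := by
    rw [← List.length_map (f := Sum.inl)]
    exact Stream'.get_append_right 1 _ _
  constructor
  · rintro (⟨v, f, -, -, -, -, -, hα⟩ | ⟨w', u', hw', hpre', hnat', hnext'⟩)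
    · exact absurd ((hα w.length).symm.trans hnat) Sum.inl_ne_inr
    · obtain rfl := List.eq_of_inl_prefix_of_inr hpre' hnat' hpre hnat
      rw [← hnext, hnext', ← hw'.getLastD_eq_s4, hw.getLastD_eq_s4]
  · exact fun h => Or.inr ⟨w, u, hw, hpre, hnat, hnext.trans h⟩

end CharLang

section Automaton

variable {V σ : Type} {G : SimpleGraph V} {v₀ : V} {B : DFA (V ⊕ Unit) σ}

theorem isVState_runFrom_succ {s : Stream' V} (h0 : s.get 0 = v₀) {n : ℕ}
    (hs : ∀ j < n, s.get j = s.get (j + 1) ∨ G.Adj (s.get j) (s.get (j + 1))) :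
    IsVState G v₀ B (s.get n) (B.runFrom B.start (s.map Sum.inl) (n + 1)) :=
  ⟨s.take (n + 1), isStutterPath_take h0 hs, by
    rw [DFA.runFrom_eq_evalFrom_s4, Stream'.map_take]; rfl⟩

theorem exists_isVState_of_infinite {s : Stream' V} (h0 : s.get 0 = v₀)
    (hs : ∀ j, s.get j = s.get (j + 1) ∨ G.Adj (s.get j) (s.get (j + 1))) {p : σ → Prop}
    (hp : {n | p (B.runFrom B.start (s.map Sum.inl) n)}.Infinite) (N : ℕ) :
    ∃ t, N ≤ t ∧ ∃ q, IsVState G v₀ B (s.get t) q ∧ p q := by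
  obtain ⟨n, hn, hNn⟩ := hp.exists_gt N
  obtain ⟨t, rfl⟩ : ∃ t, n = t + 1 := ⟨n - 1, by omega⟩
  exact ⟨t, by omega, _, isVState_runFrom_succ h0 fun j _ => hs j, hn⟩

theorem IsVState.cons_inr_mem_buchiLangFrom_iff (hL : BuchiLang B = CharLang G v₀)
    {u : V} {q : σ} (hq : IsVState G v₀ B u q) (x : Stream' (V ⊕ Unit)) :
    Stream'.cons (Sum.inr ()) x ∈ B.buchiLangFrom q ↔ x.head = Sum.inl u := by
  obtain ⟨w, hw, rfl⟩ := hq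
  rw [← hw.append_cons_inr_mem_charLang_iff, ← hL]
  exact DFA.append_stream_mem_buchiLangFrom.symm

theorem IsVState.unique (hL : BuchiLang B = CharLang G v₀)
    {u v : V} {q : σ} (hu : IsVState G v₀ B u q) (hv : IsVState G v₀ B v q) : u = v := by
  have hmem := (hv.cons_inr_mem_buchiLangFrom_iff hL (Stream'.const (Sum.inl v))).2 rfl
  exact (Sum.inl_injective ((hu.cons_inr_mem_buchiLangFrom_iff hL _).1 hmem)).symm

theorem IsNatState.unique (hL : BuchiLang B = CharLang G v₀)
    {u v : V} {q : σ} (hu : IsNatState G v₀ B u q) (hv : IsNatState G v₀ B v q) : u = v := by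
  obtain ⟨qu, hqu, rfl⟩ := hu
  obtain ⟨qv, hqv, hq⟩ := hv
  have hmem := (hqv.cons_inr_mem_buchiLangFrom_iff hL (Stream'.const (Sum.inl v))).2 rfl
  rw [DFA.cons_mem_buchiLangFrom, ← hq, ← DFA.cons_mem_buchiLangFrom,
    hqu.cons_inr_mem_buchiLangFrom_iff hL] at hmem
  exact (Sum.inl_injective hmem).symm

theorem IsVState.not_isNatState (hL : BuchiLang B = CharLang G v₀)
    {u v : V} {q : σ} (hq : IsVState G v₀ B v q) : ¬IsNatState G v₀ B u q := by
  rintro ⟨q', hq', rfl⟩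
  have hmem := (hq.cons_inr_mem_buchiLangFrom_iff hL (Stream'.const (Sum.inl v))).2 rfl
  rw [← DFA.cons_mem_buchiLangFrom, hq'.cons_inr_mem_buchiLangFrom_iff hL] at hmem
  exact Sum.inr_ne_inl hmem

def acceptingVertices (G : SimpleGraph V) (v₀ : V) (B : DFA (V ⊕ Unit) σ) : Set V :=
  {v | ∃ q, IsVState G v₀ B v q ∧ q ∈ B.accept}

theorem isVertexCover_acceptingVertices (hconn : G.Connected)
    (hL : BuchiLang B = CharLang G v₀) : G.IsVertexCover (acceptingVertices G v₀ B) := by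
  intro a b hab
  obtain ⟨W⟩ := hconn.preconnected v₀ a
  obtain ⟨s, hs0, hadj, hab'⟩ := W.exists_adj_seq_eventually_mem_edge hab
  have hmem : s.map Sum.inl ∈ BuchiLang B := hL ▸ mem_charLang_of_adj hs0 hadj
  obtain ⟨t, ht, q, hq, hqF⟩ :=
    exists_isVState_of_infinite hs0 (fun j => Or.inr (hadj j)) hmem W.length
  rcases hab' t ht with h | h
  · exact Or.inl ⟨q, h ▸ hq, hqF⟩
  · exact Or.inr ⟨q, h ▸ hq, hqF⟩

theorem exists_isVState_notMem_accept (hconn : G.Connected)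
    (hL : BuchiLang B = CharLang G v₀) (v : V) : ∃ q, IsVState G v₀ B v q ∧ q ∉ B.accept := by
  obtain ⟨W⟩ := hconn.preconnected v₀ v
  let s : Stream' V := W.getVert
  have hconst : ∀ j, W.length ≤ j → s.get j = v := fun j hj => W.getVert_of_length_le hj
  have hs : ∀ j, s.get j = s.get (j + 1) ∨ G.Adj (s.get j) (s.get (j + 1)) := fun j =>
    (lt_or_ge j W.length).elim (fun hj => Or.inr (W.adj_getVert_succ hj))
      fun hj => Or.inl ((hconst j hj).trans (hconst (j + 1) (by omega)).symm)
  have hnot : s.map Sum.inl ∉ BuchiLang B :=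
    hL ▸ map_inl_notMem_charLang_of_eventually_const hconst
  obtain ⟨t, ht, q, hq, hqF⟩ := exists_isVState_of_infinite (p := (· ∉ B.accept))
    W.getVert_zero hs (Set.not_infinite.mp hnot).infinite_compl W.length
  exact ⟨q, hconst t ht ▸ hq, hqF⟩

theorem two_mul_card_add_ncard_acceptingVertices_le [Fintype V] [Fintype σ]
    (hconn : G.Connected) (hL : BuchiLang B = CharLang G v₀) :
    2 * Fintype.card V + (acceptingVertices G v₀ B).ncard ≤ Fintype.card σ := by
  classical
  choose q hq hqF using exists_isVState_notMem_accept hconn hL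
  let f : V ⊕ V ⊕ acceptingVertices G v₀ B → σ :=
    Sum.elim q (Sum.elim (fun v => B.step (q v) (Sum.inr ())) fun c => c.2.choose)
  have hnat : ∀ v, IsNatState G v₀ B v (B.step (q v) (Sum.inr ())) := fun v => ⟨q v, hq v, rfl⟩
  have hf : f.Injective := by
    rintro (u | u | ⟨u, hu⟩) (v | v | ⟨v, hv⟩) h <;>
      simp only [f, Sum.elim_inl, Sum.elim_inr] at h
    · exact congrArg Sum.inl ((hq u).unique hL (h ▸ hq v))
    · exact ((hq u).not_isNatState hL (h ▸ hnat v)).elim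
    · exact (hqF u (h ▸ hv.choose_spec.2)).elim
    · exact ((hq v).not_isNatState hL (h ▸ hnat u)).elim
    · exact congrArg (Sum.inr ∘ Sum.inl) ((hnat u).unique hL (h ▸ hnat v))
    · exact (hv.choose_spec.1.not_isNatState hL (h ▸ hnat u)).elim
    · exact (hqF v (h ▸ hu.choose_spec.2)).elim
    · exact (hu.choose_spec.1.not_isNatState hL (h ▸ hnat v)).elim
    · exact congrArg (Sum.inr ∘ Sum.inr) (Subtype.ext
        (hu.choose_spec.1.unique hL (h ▸ hv.choose_spec.1)))
  have hcard := Fintype.card_le_of_injective f hf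
  rw [Fintype.card_sum, Fintype.card_sum,
    ← Nat.card_eq_fintype_card (α := acceptingVertices G v₀ B), Nat.card_coe_set_eq] at hcard
  omega

end Automaton

theorem cover_and_state_lower_bound_general {V σ : Type} [Fintype V] [Fintype σ]
    (G : SimpleGraph V) (v₀ : V) (hconn : G.Connected)
    (B : DFA (V ⊕ Unit) σ) (hL : BuchiLang B = CharLang G v₀) :
    (∀ a b : V, G.Adj a b →
        a ∈ {v : V | ∃ q : σ, IsVState G v₀ B v q ∧ q ∈ B.accept} ∨
        b ∈ {v : V | ∃ q : σ, IsVState G v₀ B v q ∧ q ∈ B.accept}) ∧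
    2 * Fintype.card V + {v : V | ∃ q : σ, IsVState G v₀ B v q ∧ q ∈ B.accept}.ncard ≤
      Fintype.card σ :=
  ⟨fun _ _ hab => isVertexCover_acceptingVertices hconn hL hab,
    two_mul_card_add_ncard_acceptingVertices_le hconn hL⟩

theorem cover_and_state_lower_bound {V σ : Type} [Fintype V] [Fintype σ]
    (G : SimpleGraph V) (v₀ : V) (hconn : G.Connected) (hcard : 1 < Fintype.card V)
    (B : DFA (V ⊕ Unit) σ) (hL : BuchiLang B = CharLang G v₀) :
    (∀ a b : V, G.Adj a b →
        a ∈ {v : V | ∃ q : σ, IsVState G v₀ B v q ∧ q ∈ B.accept} ∨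
        b ∈ {v : V | ∃ q : σ, IsVState G v₀ B v q ∧ q ∈ B.accept}) ∧
    2 * Fintype.card V + {v : V | ∃ q : σ, IsVState G v₀ B v q ∧ q ∈ B.accept}.ncard ≤
      Fintype.card σ :=
  cover_and_state_lower_bound_general G v₀ hconn B hL
end

section
/- Let M₁ = (Q₁, δ₁, q₀¹, F₁) and M₂ = (Q₂, δ₂, q₀², F₂) be deterministic automata over the same finite alphabet Σ, and let p ∈ Q₁ and q ∈ Q₂ be almost equivalent states. Then for every infinite word α : ℕ → Σ, the number of positions n with (r¹ n ∈ F₁) ≠ (r² n ∈ F₂) is at most |Q₁| · |Q₂|, where r¹ and r² are the runs on α from p and from q respectively (i.e., the finite difference is uniformly bounded by the number of product states). -/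
/-- State `p` of `M₁` and state `q` of `M₂` are almost equivalent: for every
infinite word, the runs from `p` and from `q` disagree on membership in the
accepting sets only at finitely many positions. -/
def AlmostEquiv {α σ₁ σ₂ : Type*} (M₁ : DFA α σ₁) (M₂ : DFA α σ₂)
    (p : σ₁) (q : σ₂) : Prop :=
  ∀ x : ℕ → α,
    {n : ℕ | (M₁.runFrom p x n ∈ M₁.accept) ≠ (M₂.runFrom q x n ∈ M₂.accept)}.Finite

theorem Set.exists_lt_map_eq_of_card_lt_ncard {ι β : Type*} [LinearOrder ι] [Finite β]
    {s : Set ι} (f : ι → β) (hs : Nat.card β < s.ncard) :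
    ∃ m ∈ s, ∃ n ∈ s, m < n ∧ f m = f n := by
  obtain ⟨a, ha, b, hb, hab, hfab⟩ :=
    Set.exists_ne_map_eq_of_ncard_lt_of_maps_to (t := Set.univ) (by rwa [Set.ncard_univ])
      (fun a _ => Set.mem_univ (f a))
  rcases hab.lt_or_gt with hlt | hgt
  · exact ⟨a, ha, b, hb, hlt, hfab⟩
  · exact ⟨b, hb, a, ha, hgt, hfab.symm⟩

/-- The ultimately periodic word `x 0 ⋯ x (m - 1) (x m ⋯ x (m + L - 1))^ω`. -/
def lassoWord {α : Type*} (x : ℕ → α) (m L : ℕ) : ℕ → α :=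
  fun j => if j < m then x j else x (m + (j - m) % L)

theorem lassoWord_of_lt {α : Type*} (x : ℕ → α) {m j : ℕ} (L : ℕ) (hj : j < m) :
    lassoWord x m L j = x j := if_pos hj

theorem lassoWord_add_mul_add {α : Type*} (x : ℕ → α) (m L i : ℕ) {k : ℕ} (hk : k < L) :
    lassoWord x m L (m + i * L + k) = x (m + k) := by
  have hmod : (i * L + k) % L = k := by rw [Nat.mul_add_mod', Nat.mod_eq_of_lt hk]
  simp [lassoWord, Nat.add_assoc, hmod]

namespace DFA

variable {α σ : Type*} (M : DFA α σ)

theorem runFrom_congr {q : σ} {x y : ℕ → α} {n : ℕ} (hxy : ∀ k < n, x k = y k) :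
    M.runFrom q x n = M.runFrom q y n := by
  induction n with
  | zero => rfl
  | succ n ih =>
    simp only [runFrom]
    rw [ih fun k hk => hxy k (hk.trans n.lt_succ_self), hxy n n.lt_succ_self]

theorem runFrom_add (q : σ) (x : ℕ → α) (a b : ℕ) :
    M.runFrom q x (a + b) = M.runFrom (M.runFrom q x a) (fun k => x (a + k)) b := by
  induction b with
  | zero => rfl
  | succ b ih => exact congrArg (M.step · (x (a + b))) ih

theorem runFrom_lassoWord_add_mul (q : σ) (x : ℕ → α) {m L : ℕ}
    (hloop : M.runFrom q x (m + L) = M.runFrom q x m) (i : ℕ) :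
    M.runFrom q (lassoWord x m L) (m + i * L) = M.runFrom q x m := by
  induction i with
  | zero =>
    rw [Nat.zero_mul, Nat.add_zero]
    exact M.runFrom_congr fun k hk => lassoWord_of_lt x L hk
  | succ i ih =>
    calc M.runFrom q (lassoWord x m L) (m + (i + 1) * L)
        = M.runFrom (M.runFrom q (lassoWord x m L) (m + i * L))
            (fun k => lassoWord x m L (m + i * L + k)) L := by
          rw [← runFrom_add, Nat.succ_mul, Nat.add_assoc]
      _ = M.runFrom (M.runFrom q x m) (fun k => x (m + k)) L := by
          rw [ih]
          exact M.runFrom_congr fun k hk => lassoWord_add_mul_add x m L i hk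
      _ = M.runFrom q x m := by rw [← runFrom_add, hloop]

end DFA

theorem AlmostEquiv.runFrom_ne_of_lt {α σ₁ σ₂ : Type*} {M₁ : DFA α σ₁} {M₂ : DFA α σ₂}
    {p : σ₁} {q : σ₂} (h : AlmostEquiv M₁ M₂ p q) (x : ℕ → α) {m n : ℕ} (hmn : m < n)
    (hm : (M₁.runFrom p x m ∈ M₁.accept) ≠ (M₂.runFrom q x m ∈ M₂.accept)) :
    (M₁.runFrom p x m, M₂.runFrom q x m) ≠ (M₁.runFrom p x n, M₂.runFrom q x n) := by
  intro hpair
  obtain ⟨L, hL, rfl⟩ : ∃ L, 0 < L ∧ n = m + L := ⟨n - m, by omega, by omega⟩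
  have hloop₁ := M₁.runFrom_lassoWord_add_mul p x (congrArg Prod.fst hpair).symm
  have hloop₂ := M₂.runFrom_lassoWord_add_mul q x (congrArg Prod.snd hpair).symm
  have hinj : Function.Injective fun i => m + i * L := fun i j hij =>
    Nat.eq_of_mul_eq_mul_right hL (Nat.add_left_cancel hij)
  refine (Set.infinite_range_of_injective hinj).mono ?_ (h (lassoWord x m L))
  rintro _ ⟨i, rfl⟩
  simpa only [Set.mem_ofPred_eq, hloop₁, hloop₂] using hm

theorem almostEquiv_diff_bounded_general {α σ₁ σ₂ : Type} [Fintype σ₁] [Fintype σ₂]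
    (M₁ : DFA α σ₁) (M₂ : DFA α σ₂) (p : σ₁) (q : σ₂)
    (h : AlmostEquiv M₁ M₂ p q) :
    ∀ x : ℕ → α,
      {n : ℕ | (M₁.runFrom p x n ∈ M₁.accept) ≠ (M₂.runFrom q x n ∈ M₂.accept)}.ncard ≤
        Fintype.card σ₁ * Fintype.card σ₂ := by
  intro x
  by_contra! hcard
  obtain ⟨m, hm, n, -, hmn, hpair⟩ :=
    Set.exists_lt_map_eq_of_card_lt_ncard (fun k => (M₁.runFrom p x k, M₂.runFrom q x k))
      (by rwa [Nat.card_eq_fintype_card, Fintype.card_prod])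
  exact h.runFrom_ne_of_lt x hmn hm hpair

theorem almostEquiv_diff_bounded {α σ₁ σ₂ : Type} [Fintype α] [Fintype σ₁] [Fintype σ₂]
    (M₁ : DFA α σ₁) (M₂ : DFA α σ₂) (p : σ₁) (q : σ₂)
    (h : AlmostEquiv M₁ M₂ p q) :
    ∀ x : ℕ → α,
      {n : ℕ | (M₁.runFrom p x n ∈ M₁.accept) ≠ (M₂.runFrom q x n ∈ M₂.accept)}.ncard ≤
        Fintype.card σ₁ * Fintype.card σ₂ :=
  almostEquiv_diff_bounded_general M₁ M₂ p q h
end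

section
/- Let A and B be deterministic automata over the same finite alphabet Σ that are both weak (i.e., L_B(A) = L_C(A) and L_B(B) = L_C(B)). If L_B(A) = L_B(B), then A and B are almost equivalent. -/
/-- The co-Büchi language of a deterministic automaton: the set of infinite
words whose run from the initial state leaves the accepting set only finitely
often. -/
def CoBuchiLang {α σ : Type*} (M : DFA α σ) : Set (ℕ → α) :=
  {x | {n | M.runFrom M.start x n ∉ M.accept}.Finite}

namespace Set

variable {ι : Type*} {p q : ι → Prop}

theorem Finite.setOf_ne (hp : {i | p i}.Finite) (hq : {i | q i}.Finite) :
    {i | p i ≠ q i}.Finite :=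
  (hp.union hq).subset fun i hi => by
    by_contra h
    simp_all

theorem Finite.setOf_ne_of_not (hp : {i | ¬p i}.Finite) (hq : {i | ¬q i}.Finite) :
    {i | p i ≠ q i}.Finite := by
  simpa only [ne_eq, not_iff_not, eq_iff_iff] using hp.setOf_ne hq

end Set

theorem weak_lang_eq_almostEquiv_general {α σ₁ σ₂ : Type}
    (A : DFA α σ₁) (B : DFA α σ₂)
    (hA : BuchiLang A = CoBuchiLang A) (hB : BuchiLang B = CoBuchiLang B)
    (hL : BuchiLang A = BuchiLang B) :
    AlmostEquiv A B A.start B.start := by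
  intro x
  by_cases hx : x ∈ BuchiLang A
  · have hxA : x ∈ CoBuchiLang A := hA ▸ hx
    have hxB : x ∈ CoBuchiLang B := hB ▸ hL ▸ hx
    exact Set.Finite.setOf_ne_of_not hxA hxB
  · have hxB : x ∉ BuchiLang B := hL ▸ hx
    exact Set.Finite.setOf_ne (Set.not_infinite.mp hx) (Set.not_infinite.mp hxB)

theorem weak_lang_eq_almostEquiv {α σ₁ σ₂ : Type} [Fintype α] [Fintype σ₁] [Fintype σ₂]
    (A : DFA α σ₁) (B : DFA α σ₂)
    (hA : BuchiLang A = CoBuchiLang A) (hB : BuchiLang B = CoBuchiLang B)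
    (hL : BuchiLang A = BuchiLang B) :
    AlmostEquiv A B A.start B.start :=
  weak_lang_eq_almostEquiv_general A B hA hB hL
end

section
/- Let A be a weak deterministic automaton over a finite alphabet Σ (i.e., L_B(A) = L_C(A)) and let C be a deterministic automaton over Σ that is almost equivalent to A. Then C is weak as well: L_B(C) = L_C(C). -/
/-! Almost equivalence says the two runs on a word agree on acceptance cofinitely often, and
both "infinitely often accepting" and "cofinitely often accepting" are invariant under changing a
predicate on a finite set of positions. Hence `A` and `C` have the same Büchi language and the
same co-Büchi language, so the weakness of `A` transfers to `C`. -/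

open Filter

section FiniteDisagreement

variable {ι : Type*} {P Q : ι → Prop}

lemma eventually_cofinite_iff_of_finite_ne (h : {i | P i ≠ Q i}.Finite) :
    ∀ᶠ i in cofinite, (P i ↔ Q i) :=
  eventually_cofinite.2 (by simpa only [ne_eq, eq_iff_iff] using h)

lemma setOf_infinite_congr_of_finite_ne (h : {i | P i ≠ Q i}.Finite) :
    {i | P i}.Infinite ↔ {i | Q i}.Infinite := by
  simpa only [frequently_cofinite_iff_infinite] using
    frequently_congr (eventually_cofinite_iff_of_finite_ne h)

lemma setOf_not_finite_congr_of_finite_ne (h : {i | P i ≠ Q i}.Finite) :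
    {i | ¬P i}.Finite ↔ {i | ¬Q i}.Finite := by
  simpa only [eventually_cofinite] using
    eventually_congr (eventually_cofinite_iff_of_finite_ne h)

end FiniteDisagreement

namespace AlmostEquiv

variable {α σ₁ σ₂ : Type*} {A : DFA α σ₁} {C : DFA α σ₂}

lemma mem_buchiLang_iff (h : AlmostEquiv A C A.start C.start) (x : ℕ → α) :
    x ∈ BuchiLang A ↔ x ∈ BuchiLang C :=
  setOf_infinite_congr_of_finite_ne (h x)

lemma mem_coBuchiLang_iff (h : AlmostEquiv A C A.start C.start) (x : ℕ → α) :
    x ∈ CoBuchiLang A ↔ x ∈ CoBuchiLang C :=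
  setOf_not_finite_congr_of_finite_ne (h x)

end AlmostEquiv

theorem weak_of_almostEquiv_weak_general {α σ₁ σ₂ : Type}
    (A : DFA α σ₁) (C : DFA α σ₂)
    (hA : BuchiLang A = CoBuchiLang A) (h : AlmostEquiv A C A.start C.start) :
    BuchiLang C = CoBuchiLang C := by
  ext x
  rw [← h.mem_buchiLang_iff, ← h.mem_coBuchiLang_iff, hA]

theorem weak_of_almostEquiv_weak {α σ₁ σ₂ : Type} [Fintype α] [Fintype σ₁] [Fintype σ₂]
    (A : DFA α σ₁) (C : DFA α σ₂)
    (hA : BuchiLang A = CoBuchiLang A) (h : AlmostEquiv A C A.start C.start) :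
    BuchiLang C = CoBuchiLang C :=
  weak_of_almostEquiv_weak_general A C hA h
end

section
/- Let A be a weak deterministic automaton over a finite alphabet Σ (i.e., L_B(A) = L_C(A)) and let D be a deterministic automaton over Σ that is almost equivalent to A and has the minimal number of states among all deterministic automata over Σ almost equivalent to A. Then D is weak, L_B(D) = L_B(A), and every weak deterministic automaton B over Σ with L_B(B) = L_B(A) has at least as many states as D. -/
/-!
Almost equivalence says the two runs on every word agree on acceptance cofinitely often, so it
preserves both the Büchi and the co-Büchi language; hence `D`, like `A`, is weak with the language
of `A`. Conversely, two weak automata with the same language are almost equivalent: on an accepted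
word both runs are eventually accepting (co-Büchi), on a rejected one both are eventually
rejecting (not Büchi). So every weak `B` recognising the language of `A` competes in the
minimality of `D`.
-/

open Filter

variable {α σ σ₁ σ₂ : Type*}

theorem mem_buchiLang_iff_frequently (M : DFA α σ) (x : ℕ → α) :
    x ∈ BuchiLang M ↔ ∃ᶠ n in cofinite, M.runFrom M.start x n ∈ M.accept :=
  frequently_cofinite_iff_infinite.symm

theorem mem_coBuchiLang_iff_eventually (M : DFA α σ) (x : ℕ → α) :
    x ∈ CoBuchiLang M ↔ ∀ᶠ n in cofinite, M.runFrom M.start x n ∈ M.accept :=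
  eventually_cofinite.symm

theorem almostEquiv_iff_eventually {M₁ : DFA α σ₁} {M₂ : DFA α σ₂} {p : σ₁} {q : σ₂} :
    AlmostEquiv M₁ M₂ p q ↔ ∀ x : ℕ → α,
      ∀ᶠ n in cofinite, (M₁.runFrom p x n ∈ M₁.accept ↔ M₂.runFrom q x n ∈ M₂.accept) := by
  simp only [AlmostEquiv, eventually_cofinite, ne_eq, eq_iff_iff]

namespace AlmostEquiv

variable {M₁ : DFA α σ₁} {M₂ : DFA α σ₂}

theorem buchiLang_eq (h : AlmostEquiv M₁ M₂ M₁.start M₂.start) :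
    BuchiLang M₁ = BuchiLang M₂ := by
  ext x
  simp only [mem_buchiLang_iff_frequently]
  exact frequently_congr (almostEquiv_iff_eventually.1 h x)

theorem coBuchiLang_eq (h : AlmostEquiv M₁ M₂ M₁.start M₂.start) :
    CoBuchiLang M₁ = CoBuchiLang M₂ := by
  ext x
  simp only [mem_coBuchiLang_iff_eventually]
  exact eventually_congr (almostEquiv_iff_eventually.1 h x)

end AlmostEquiv

theorem almostEquiv_of_buchiLang_eq {M₁ : DFA α σ₁} {M₂ : DFA α σ₂}
    (h₁ : BuchiLang M₁ = CoBuchiLang M₁) (h₂ : BuchiLang M₂ = CoBuchiLang M₂)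
    (h : BuchiLang M₁ = BuchiLang M₂) : AlmostEquiv M₁ M₂ M₁.start M₂.start := by
  refine almostEquiv_iff_eventually.2 fun x => ?_
  by_cases hx : x ∈ BuchiLang M₁
  · have hx₁ : x ∈ CoBuchiLang M₁ := h₁ ▸ hx
    have hx₂ : x ∈ CoBuchiLang M₂ := h₂ ▸ h ▸ hx
    rw [mem_coBuchiLang_iff_eventually] at hx₁ hx₂
    filter_upwards [hx₁, hx₂] with n hn₁ hn₂ using iff_of_true hn₁ hn₂
  · have hx₂ : x ∉ BuchiLang M₂ := h ▸ hx
    rw [mem_buchiLang_iff_frequently, not_frequently] at hx hx₂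
    filter_upwards [hx, hx₂] with n hn₁ hn₂ using iff_of_false hn₁ hn₂

theorem minimal_almostEquiv_of_weak_is_minimal_weak_general
    {α σA σD : Type} [Fintype σD]
    (A : DFA α σA) (D : DFA α σD)
    (hA : BuchiLang A = CoBuchiLang A)
    (hae : AlmostEquiv A D A.start D.start)
    (hmin : ∀ (σE : Type) (_ : Fintype σE) (E : DFA α σE),
      AlmostEquiv A E A.start E.start → Fintype.card σD ≤ Fintype.card σE) :
    BuchiLang D = CoBuchiLang D ∧ BuchiLang D = BuchiLang A ∧
    (∀ (σB : Type) (_ : Fintype σB) (B : DFA α σB),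
      BuchiLang B = CoBuchiLang B → BuchiLang B = BuchiLang A →
      Fintype.card σD ≤ Fintype.card σB) := by
  have hlang : BuchiLang D = BuchiLang A := hae.buchiLang_eq.symm
  refine ⟨by rw [hlang, hA, hae.coBuchiLang_eq], hlang, ?_⟩
  intro σB _ B hB hBA
  exact hmin σB _ B (almostEquiv_of_buchiLang_eq hA hB hBA.symm)

theorem minimal_almostEquiv_of_weak_is_minimal_weak
    {α σA σD : Type} [Fintype α] [Fintype σA] [Fintype σD]
    (A : DFA α σA) (D : DFA α σD)
    (hA : BuchiLang A = CoBuchiLang A)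
    (hae : AlmostEquiv A D A.start D.start)
    (hmin : ∀ (σE : Type) (_ : Fintype σE) (E : DFA α σE),
      AlmostEquiv A E A.start E.start → Fintype.card σD ≤ Fintype.card σE) :
    BuchiLang D = CoBuchiLang D ∧ BuchiLang D = BuchiLang A ∧
    (∀ (σB : Type) (_ : Fintype σB) (B : DFA α σB),
      BuchiLang B = CoBuchiLang B → BuchiLang B = BuchiLang A →
      Fintype.card σD ≤ Fintype.card σB) :=
  minimal_almostEquiv_of_weak_is_minimal_weak_general A D hA hae hmin
end

section
/- Let B = (Q, δ, q₀, F) be a deterministic automaton over a finite alphabet Σ and let S ⊆ Q be a strongly connected component of B. (1) If every cycle that stays entirely inside S passes through a state of F, then the automaton B' obtained from B by replacing F with F ∪ S satisfies L_B(B') = L_B(B). (2) If no cycle that stays entirely inside S passes through a state of F, then the automaton B'' obtained from B by replacing F with F \ S satisfies L_B(B'') = L_B(B). -/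
/-- The list of states visited when reading the finite word `w` from state `s`
(the state reached at the very end is not listed; it is `M.evalFrom s w`). -/
def DFA.trace {α σ : Type*} (M : DFA α σ) : σ → List α → List σ
  | s, [] => [s]
  | s, a :: w => s :: M.trace (M.step s a) w

/-- `q` is reachable from `p` in `M` (possibly on the empty word). -/
def Reach {α σ : Type*} (M : DFA α σ) (p q : σ) : Prop :=
  ∃ w : List α, M.evalFrom p w = q

/-!
By pigeonhole, a run that visits the strongly connected component `S` infinitely often returns to
one state of `S` at two times beyond any bound, and the run segment between them is a cycle
inside `S`, since each of its states is mutually reachable with the state it starts from.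
If every cycle inside `S` meets `F`, the run therefore visits `F` infinitely often. If no cycle
inside `S` meets `F`, the run visits each state of `F ∩ S` at most once, so deleting `S` from
`F` deletes only finitely many visits.
-/

theorem Reach.trans {α σ : Type*} {M : DFA α σ} {p q r : σ} (hpq : Reach M p q)
    (hqr : Reach M q r) : Reach M p r := by
  obtain ⟨u, rfl⟩ := hpq
  obtain ⟨v, rfl⟩ := hqr
  exact ⟨u ++ v, M.evalFrom_of_append _ u v⟩

namespace DFA

variable {α σ : Type*} (M : DFA α σ)

def scc (a : σ) : Set σ := {b | Reach M a b ∧ Reach M b a}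

def IsCycleIn (S : Set σ) (s : σ) (w : List α) : Prop :=
  w ≠ [] ∧ M.evalFrom s w = s ∧ ∀ q ∈ M.trace s w, q ∈ S

theorem runFrom_mk (s : σ) (A : Set σ) : DFA.runFrom ⟨M.step, s, A⟩ = M.runFrom := by
  funext q x n
  induction n with
  | zero => rfl
  | succ n ih => exact congrArg (M.step · (x n)) ih

theorem evalFrom_runFrom (q : σ) (x : ℕ → α) (n k : ℕ) :
    M.evalFrom (M.runFrom q x n) ((List.range' n k).map x) = M.runFrom q x (n + k) := by
  induction k generalizing n with
  | zero => rfl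
  | succ k ih =>
    rw [List.range'_succ, List.map_cons, evalFrom_cons]
    exact (ih (n + 1)).trans (congrArg _ (by omega))

theorem trace_runFrom (q : σ) (x : ℕ → α) (n k : ℕ) :
    M.trace (M.runFrom q x n) ((List.range' n k).map x) =
      (List.range' n (k + 1)).map (M.runFrom q x) := by
  induction k generalizing n with
  | zero => rfl
  | succ k ih =>
    rw [List.range'_succ, List.map_cons, List.range'_succ, List.map_cons]
    exact congrArg _ (ih (n + 1))

theorem reach_runFrom (q : σ) (x : ℕ → α) {n m : ℕ} (hnm : n ≤ m) :
    Reach M (M.runFrom q x n) (M.runFrom q x m) := by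
  obtain ⟨k, rfl⟩ := Nat.exists_eq_add_of_le hnm
  exact ⟨_, M.evalFrom_runFrom q x n k⟩

theorem isCycleIn_scc_runFrom {a q : σ} {x : ℕ → α} {n k : ℕ} (hk : k ≠ 0)
    (hn : M.runFrom q x n ∈ M.scc a) (hcycle : M.runFrom q x (n + k) = M.runFrom q x n) :
    M.IsCycleIn (M.scc a) (M.runFrom q x n) ((List.range' n k).map x) := by
  refine ⟨by simpa using hk, by rw [evalFrom_runFrom, hcycle], ?_⟩
  simp only [trace_runFrom, List.mem_map, List.mem_range'_1]
  rintro _ ⟨j, ⟨hnj, hjk⟩, rfl⟩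
  have hback : Reach M (M.runFrom q x j) (M.runFrom q x n) :=
    hcycle ▸ M.reach_runFrom q x (Nat.le_of_lt_succ hjk)
  exact ⟨hn.1.trans (M.reach_runFrom q x hnj), hback.trans hn.2⟩

variable [Finite σ]

theorem exists_isCycleIn_scc_runFrom {a q : σ} {x : ℕ → α} {T : Set ℕ} (hT : T.Infinite)
    (hTS : ∀ n ∈ T, M.runFrom q x n ∈ M.scc a) :
    ∃ n ∈ T, ∃ k, M.IsCycleIn (M.scc a) (M.runFrom q x n) ((List.range' n k).map x) := by
  obtain ⟨n, hn, m, -, hnm, hrun⟩ :=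
    hT.exists_lt_map_eq_of_mapsTo (Set.mapsTo_univ (M.runFrom q x) T) Set.finite_univ
  refine ⟨n, hn, m - n, M.isCycleIn_scc_runFrom (by omega) (hTS n hn) ?_⟩
  rw [Nat.add_sub_cancel' hnm.le, hrun]

theorem infinite_accept_of_infinite_scc {a q : σ} {x : ℕ → α}
    (hcycles : ∀ s ∈ M.scc a, ∀ w, M.IsCycleIn (M.scc a) s w → ∃ p ∈ M.trace s w, p ∈ M.accept)
    (hS : {n | M.runFrom q x n ∈ M.scc a}.Infinite) :
    {n | M.runFrom q x n ∈ M.accept}.Infinite := by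
  refine Set.infinite_of_forall_exists_gt fun N ↦ ?_
  obtain ⟨n, ⟨hn, hNn⟩, k, hcycle⟩ :=
    M.exists_isCycleIn_scc_runFrom (hS.sdiff (Set.finite_Iic N)) fun n hn ↦ hn.1
  obtain ⟨p, hp, hpF⟩ := hcycles _ hn _ hcycle
  rw [trace_runFrom, List.mem_map] at hp
  obtain ⟨j, hj, rfl⟩ := hp
  exact ⟨j, hpF, (not_le.mp hNn).trans_le (List.mem_range'_1.mp hj).1⟩

theorem finite_accept_inter_scc {a q : σ} {x : ℕ → α}
    (hcycles : ∀ s ∈ M.scc a, ∀ w, M.IsCycleIn (M.scc a) s w → ∀ p ∈ M.trace s w, p ∉ M.accept) :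
    {n | M.runFrom q x n ∈ M.accept ∩ M.scc a}.Finite := by
  by_contra hinf
  obtain ⟨n, hn, k, hcycle⟩ := M.exists_isCycleIn_scc_runFrom hinf fun n hn ↦ hn.2
  refine hcycles _ hn.2 _ hcycle _ ?_ hn.1
  rw [trace_runFrom]
  exact List.mem_map_of_mem (List.mem_range'_1.mpr ⟨le_rfl, by omega⟩)

end DFA

theorem buchiLang_homogenise_scc_general {α σ : Type} [Fintype σ]
    (B : DFA α σ) (S : Set σ)
    (hS : ∃ a : σ, S = {b | Reach B a b ∧ Reach B b a}) :
    ((∀ s ∈ S, ∀ w : List α, w ≠ [] → B.evalFrom s w = s →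
        (∀ q ∈ B.trace s w, q ∈ S) → ∃ q ∈ B.trace s w, q ∈ B.accept) →
      BuchiLang ⟨B.step, B.start, B.accept ∪ S⟩ = BuchiLang B) ∧
    ((∀ s ∈ S, ∀ w : List α, w ≠ [] → B.evalFrom s w = s →
        (∀ q ∈ B.trace s w, q ∈ S) → ∀ q ∈ B.trace s w, q ∉ B.accept) →
      BuchiLang ⟨B.step, B.start, B.accept \ S⟩ = BuchiLang B) := by
  obtain ⟨a, rfl⟩ := hS
  refine ⟨fun hcycles ↦ ?_, fun hcycles ↦ ?_⟩ <;> ext x <;>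
    simp only [BuchiLang, Set.mem_ofPred_eq, DFA.runFrom_mk]
  · refine ⟨fun h ↦ ?_, fun h ↦ h.mono fun n ↦ Or.inl⟩
    rcases Set.infinite_union.mp (Set.ofPred_or ▸ h) with hF | hS
    · exact hF
    · exact B.infinite_accept_of_infinite_scc
        (fun s hs w hw ↦ hcycles s hs w hw.1 hw.2.1 hw.2.2) hS
  · refine ⟨fun h ↦ h.mono fun n ↦ And.left, fun h ↦ ?_⟩
    have hFS := B.finite_accept_inter_scc (q := B.start) (x := x)
      (fun s hs w hw ↦ hcycles s hs w hw.1 hw.2.1 hw.2.2)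
    exact (h.sdiff hFS).mono fun n hn ↦ ⟨hn.1, fun hS ↦ hn.2 ⟨hn.1, hS⟩⟩

theorem buchiLang_homogenise_scc {α σ : Type} [Fintype α] [Fintype σ]
    (B : DFA α σ) (S : Set σ)
    (hS : ∃ a : σ, S = {b | Reach B a b ∧ Reach B b a}) :
    ((∀ s ∈ S, ∀ w : List α, w ≠ [] → B.evalFrom s w = s →
        (∀ q ∈ B.trace s w, q ∈ S) → ∃ q ∈ B.trace s w, q ∈ B.accept) →
      BuchiLang ⟨B.step, B.start, B.accept ∪ S⟩ = BuchiLang B) ∧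
    ((∀ s ∈ S, ∀ w : List α, w ≠ [] → B.evalFrom s w = s →
        (∀ q ∈ B.trace s w, q ∈ S) → ∀ q ∈ B.trace s w, q ∉ B.accept) →
      BuchiLang ⟨B.step, B.start, B.accept \ S⟩ = BuchiLang B) :=
  buchiLang_homogenise_scc_general B S hS
end
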